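/- Let f be smooth with f'(x_c) = 0, f''(x_c) ≠ 0 at x_c = x_j + λΔx, λ ∈ (-1,1), λ ≠ 0. With δ⁽²⁾₂ = f_{j+1} − 2f_j + f_{j-1} and δ⁽³⁾₁ = f_{j+2} − 3f_{j+1} + 3f_j − f_{j-1} (f_k = f(x_j + kΔx)), one has δ⁽²⁾₂·δ⁽³⁾₁ = f''(x_c) f'''(x_c) Δx⁵ + O(Δx⁶), while at λ = 0, δ⁽²⁾₂·δ⁽³⁾₁ = f''(x_j) f'''(x_j) Δx⁵ + (1/2) f''(x_j) f⁽⁴⁾(x_j) Δx⁶ + O(Δx⁷). -/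

import Mathlib

open Finset in
lemma taylor_bound (n : ℕ) : ∀ (f : ℝ → ℝ), ContDiff ℝ ((⊤ : ℕ∞) : WithTop ℕ∞) f → ∀ a : ℝ,
    ∃ C, 0 ≤ C ∧ ∀ t : ℝ, |t| ≤ 1 →
      |f (a + t) - ∑ k ∈ Finset.range (n + 1),
          iteratedDeriv k f a * t ^ k / (Nat.factorial k)|
        ≤ C * |t| ^ (n + 1) := by
  induction n with
  | zero =>
    intro f hf a
    obtain ⟨C, hC⟩ := (isCompact_Icc (a := a - 1) (b := a + 1)).exists_bound_of_continuousOn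
      (hf.continuous_deriv (by exact_mod_cast le_top)).continuousOn
    refine ⟨max C 0, le_max_right _ _, fun t ht => ?_⟩
    have habs := abs_le.mp ht
    have h1 : ∀ x ∈ Set.Icc (a - 1) (a + 1), DifferentiableAt ℝ f x :=
      fun x _ => (hf.differentiable (by simp)).differentiableAt
    have h2 : ∀ x ∈ Set.Icc (a - 1) (a + 1), ‖deriv f x‖ ≤ max C 0 :=
      fun x hx => le_trans (hC x hx) (le_max_left _ _)
    have := Convex.norm_image_sub_le_of_norm_deriv_le h1 h2 (convex_Icc _ _)
      (Set.mem_Icc.mpr ⟨by linarith, by linarith⟩ : a ∈ Set.Icc (a - 1) (a + 1))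
      (Set.mem_Icc.mpr ⟨by linarith, by linarith⟩ : a + t ∈ Set.Icc (a - 1) (a + 1))
    simp only [Real.norm_eq_abs, add_sub_cancel_left] at this
    simpa [Finset.sum_range_one] using this
  | succ n ih =>
    intro f hf a
    have hf' : ContDiff ℝ ((⊤ : ℕ∞) : WithTop ℕ∞) (deriv f) := (contDiff_infty_iff_deriv.mp hf).2
    obtain ⟨C, hC0, hC⟩ := ih (deriv f) hf' a
    refine ⟨C, hC0, fun t ht => ?_⟩
    set E : ℝ → ℝ := fun t =>
      f (a + t) - ∑ k ∈ Finset.range (n + 2),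
        iteratedDeriv k f a * t ^ k / (Nat.factorial k) with hE
    have hEd : ∀ s : ℝ, HasDerivAt E
        (deriv f (a + s) - ∑ k ∈ Finset.range (n + 1),
          iteratedDeriv k (deriv f) a * s ^ k / (Nat.factorial k)) s := by
      intro s
      have hfa : HasDerivAt (fun t : ℝ => f (a + t)) (deriv f (a + s)) s := by
        have h1 : HasDerivAt (fun t : ℝ => a + t) 1 s := (hasDerivAt_id s).const_add a
        have h2 : HasDerivAt f (deriv f (a + s)) (a + s) :=
          ((hf.differentiable (by simp)) (a + s)).hasDerivAt
        simpa [Function.comp_def] using h2.comp s h1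
      have hpoly : HasDerivAt (fun t : ℝ => ∑ k ∈ Finset.range (n + 2),
          iteratedDeriv k f a * t ^ k / (Nat.factorial k))
          (∑ k ∈ Finset.range (n + 1),
            iteratedDeriv k (deriv f) a * s ^ k / (Nat.factorial k)) s := by
        have h1 : HasDerivAt (fun t : ℝ => ∑ k ∈ Finset.range (n + 2),
            iteratedDeriv k f a * t ^ k / (Nat.factorial k))
            (∑ k ∈ Finset.range (n + 2),
              iteratedDeriv k f a * ((k : ℝ) * s ^ (k - 1)) / (Nat.factorial k)) s := by
          refine HasDerivAt.fun_sum fun k _ => ?_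
          exact ((hasDerivAt_pow k s).const_mul (iteratedDeriv k f a)).div_const _
        convert h1 using 1
        rw [Finset.sum_range_succ'
          (fun k => iteratedDeriv k f a * ((k : ℝ) * s ^ (k - 1)) / (Nat.factorial k))]
        simp only [Nat.cast_zero, zero_mul, mul_zero, zero_div, add_zero]
        refine Finset.sum_congr rfl fun k _ => ?_
        rw [← iteratedDeriv_succ']
        have hfac : ((Nat.factorial (k + 1)) : ℝ) = (k + 1) * (Nat.factorial k) := by
          push_cast [Nat.factorial_succ]; ring
        rw [hfac]
        have hk : ((Nat.factorial k) : ℝ) ≠ 0 := Nat.cast_ne_zero.mpr k.factorial_ne_zero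
        have hk1 : ((k : ℝ) + 1) ≠ 0 := by positivity
        field_simp
        rw [show k + 1 - 1 = k by omega]; push_cast; ring
      exact hfa.sub hpoly
    have hE0 : E 0 = 0 := by
      simp [hE, Finset.sum_range_succ']
    have hbound : ∀ s ∈ Set.uIcc 0 t, ‖deriv E s‖ ≤ C * |t| ^ (n + 1) := by
      intro s hs
      have hst : |s| ≤ |t| := by
        rcases le_total 0 t with h | h
        · rw [Set.uIcc_of_le h] at hs
          rw [abs_of_nonneg hs.1, abs_of_nonneg h]; exact hs.2
        · rw [Set.uIcc_of_ge h] at hs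
          rw [abs_of_nonpos hs.2, abs_of_nonpos h]; linarith [hs.1]
      rw [(hEd s).deriv, Real.norm_eq_abs]
      calc |deriv f (a + s) - ∑ k ∈ Finset.range (n + 1),
            iteratedDeriv k (deriv f) a * s ^ k / (Nat.factorial k)|
          ≤ C * |s| ^ (n + 1) := hC s (hst.trans ht)
        _ ≤ C * |t| ^ (n + 1) := by gcongr
    have := Convex.norm_image_sub_le_of_norm_deriv_le
      (f := E) (fun s _ => (hEd s).differentiableAt) hbound (convex_uIcc 0 t)
      Set.left_mem_uIcc Set.right_mem_uIcc
    rw [hE0, sub_zero, sub_zero, Real.norm_eq_abs, Real.norm_eq_abs] at this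
    calc |E t| ≤ C * |t| ^ (n + 1) * |t| := this
      _ = C * |t| ^ (n + 1 + 1) := by ring

set_option maxHeartbeats 2000000 in
/-- Leading behavior of the product δ⁽²⁾₂·δ⁽³⁾₁ at a first-order critical point
x_c = x_j + λΔx: f''(x_c)f'''(x_c)Δx⁵ + O(Δx⁶) for λ ≠ 0, and
f''f'''Δx⁵ + (1/2)f''f⁽⁴⁾Δx⁶ + O(Δx⁷) at λ = 0. -/
theorem stmt16 (f : ℝ → ℝ) (hf : ContDiff ℝ (⊤ : ℕ∞) f) (xc lam : ℝ)
    (hlam : lam ∈ Set.Ioo (-1 : ℝ) 1)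
    (h1 : deriv f xc = 0) (h2 : iteratedDeriv 2 f xc ≠ 0) :
    (lam ≠ 0 →
      ∃ C > 0, ∃ δ > 0, ∀ h : ℝ, 0 < h → h < δ →
        |(f (xc - lam * h + h) - 2 * f (xc - lam * h) + f (xc - lam * h - h))
            * (f (xc - lam * h + 2 * h) - 3 * f (xc - lam * h + h)
              + 3 * f (xc - lam * h) - f (xc - lam * h - h))
          - (iteratedDeriv 2 f xc) * (iteratedDeriv 3 f xc) * h ^ 5| ≤ C * h ^ 6) ∧
    (lam = 0 →
      ∃ C > 0, ∃ δ > 0, ∀ h : ℝ, 0 < h → h < δ →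
        |(f (xc + h) - 2 * f xc + f (xc - h))
            * (f (xc + 2 * h) - 3 * f (xc + h) + 3 * f xc - f (xc - h))
          - ((iteratedDeriv 2 f xc) * (iteratedDeriv 3 f xc) * h ^ 5
            + (1 / 2) * (iteratedDeriv 2 f xc) * (iteratedDeriv 4 f xc) * h ^ 6)|
          ≤ C * h ^ 7) := by
  obtain ⟨hl1, hl2⟩ := hlam
  have hftop : ContDiff ℝ ((⊤ : ℕ∞) : WithTop ℕ∞) f := hf.of_le (by simp)
  set f2 := iteratedDeriv 2 f xc with hf2
  set f3 := iteratedDeriv 3 f xc with hf3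
  set f4 := iteratedDeriv 4 f xc with hf4
  constructor
  ·
    intro _
    obtain ⟨C2, hC20, hC2⟩ := taylor_bound 2 f hftop xc
    obtain ⟨C3, hC30, hC3⟩ := taylor_bound 3 f hftop xc
    set P2 : ℝ → ℝ := fun t => ∑ k ∈ Finset.range 3,
      iteratedDeriv k f xc * t ^ k / (Nat.factorial k) with hP2def
    set P3 : ℝ → ℝ := fun t => ∑ k ∈ Finset.range 4,
      iteratedDeriv k f xc * t ^ k / (Nat.factorial k) with hP3def
    have hP2 : ∀ t, P2 t = iteratedDeriv 0 f xc + iteratedDeriv 1 f xc * t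
        + f2 * t ^ 2 / 2 := by
      intro t
      simp [hP2def, Finset.sum_range_succ, Nat.factorial, ← hf2]
    have hP3 : ∀ t, P3 t = iteratedDeriv 0 f xc + iteratedDeriv 1 f xc * t
        + f2 * t ^ 2 / 2 + f3 * t ^ 3 / 6 := by
      intro t
      simp [hP3def, Finset.sum_range_succ, Nat.factorial, ← hf2, ← hf3]
    refine ⟨648 * |f2| * C3 + 108 * C2 * |f3| + 69984 * C2 * C3 + 1, by
        nlinarith [mul_nonneg (abs_nonneg f2) hC30, mul_nonneg hC20 (abs_nonneg f3),
          mul_nonneg hC20 hC30], 1 / 3, by norm_num, fun h hh hδ => ?_⟩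
    have hh1 : h ≤ 1 := by linarith
    have h3 : 3 * h ≤ 1 := by linarith
    have e1 : xc - lam * h + h = xc + (1 - lam) * h := by ring
    have e2 : xc - lam * h + 2 * h = xc + (2 - lam) * h := by ring
    have e3 : xc - lam * h - h = xc + (-1 - lam) * h := by ring
    have e0 : xc - lam * h = xc + -lam * h := by ring
    rw [e1, e2, e3, e0]
    have herr2 : ∀ c : ℝ, |c| ≤ 3 → |f (xc + c * h) - P2 (c * h)| ≤ 27 * C2 * h ^ 3 := by
      intro c hc
      have habs : |c * h| ≤ 3 * h := by
        rw [abs_mul, abs_of_pos hh]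
        exact mul_le_mul_of_nonneg_right hc hh.le
      calc |f (xc + c * h) - P2 (c * h)| ≤ C2 * |c * h| ^ 3 := hC2 _ (habs.trans h3)
        _ ≤ C2 * (3 * h) ^ 3 :=
            mul_le_mul_of_nonneg_left (pow_le_pow_left₀ (abs_nonneg _) habs 3) hC20
        _ = 27 * C2 * h ^ 3 := by ring
    have herr3 : ∀ c : ℝ, |c| ≤ 3 → |f (xc + c * h) - P3 (c * h)| ≤ 81 * C3 * h ^ 4 := by
      intro c hc
      have habs : |c * h| ≤ 3 * h := by
        rw [abs_mul, abs_of_pos hh]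
        exact mul_le_mul_of_nonneg_right hc hh.le
      calc |f (xc + c * h) - P3 (c * h)| ≤ C3 * |c * h| ^ 4 := hC3 _ (habs.trans h3)
        _ ≤ C3 * (3 * h) ^ 4 :=
            mul_le_mul_of_nonneg_left (pow_le_pow_left₀ (abs_nonneg _) habs 4) hC30
        _ = 81 * C3 * h ^ 4 := by ring
    have c1 : |(1 : ℝ) - lam| ≤ 3 := abs_le.mpr ⟨by linarith, by linarith⟩
    have c2 : |(2 : ℝ) - lam| ≤ 3 := abs_le.mpr ⟨by linarith, by linarith⟩
    have c0 : |(-lam : ℝ)| ≤ 3 := abs_le.mpr ⟨by linarith, by linarith⟩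
    have cm : |(-1 : ℝ) - lam| ≤ 3 := abs_le.mpr ⟨by linarith, by linarith⟩
    set a1 := f (xc + (1 - lam) * h) - P2 ((1 - lam) * h) with ha1
    set a0 := f (xc + -lam * h) - P2 (-lam * h) with ha0
    set am := f (xc + (-1 - lam) * h) - P2 ((-1 - lam) * h) with ham
    set b2 := f (xc + (2 - lam) * h) - P3 ((2 - lam) * h) with hb2
    set b1 := f (xc + (1 - lam) * h) - P3 ((1 - lam) * h) with hb1
    set b0 := f (xc + -lam * h) - P3 (-lam * h) with hb0
    set bm := f (xc + (-1 - lam) * h) - P3 ((-1 - lam) * h) with hbm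
    have hA1 := herr2 (1 - lam) c1
    have hA0 := herr2 (-lam) c0
    have hAm := herr2 (-1 - lam) cm
    have hB2 := herr3 (2 - lam) c2
    have hB1 := herr3 (1 - lam) c1
    have hB0 := herr3 (-lam) c0
    have hBm := herr3 (-1 - lam) cm
    rw [← ha1] at hA1
    rw [← ha0] at hA0
    rw [← ham] at hAm
    rw [← hb2] at hB2
    rw [← hb1] at hB1
    rw [← hb0] at hB0
    rw [← hbm] at hBm
    set E2 := f (xc + (1 - lam) * h) - 2 * f (xc + -lam * h) + f (xc + (-1 - lam) * h)
      - f2 * h ^ 2 with hE2def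
    set E3 := f (xc + (2 - lam) * h) - 3 * f (xc + (1 - lam) * h) + 3 * f (xc + -lam * h)
      - f (xc + (-1 - lam) * h) - f3 * h ^ 3 with hE3def
    have comb2 : P2 ((1 - lam) * h) - 2 * P2 (-lam * h) + P2 ((-1 - lam) * h)
        = f2 * h ^ 2 := by
      simp only [hP2]; ring
    have comb3 : P3 ((2 - lam) * h) - 3 * P3 ((1 - lam) * h) + 3 * P3 (-lam * h)
        - P3 ((-1 - lam) * h) = f3 * h ^ 3 := by
      simp only [hP3]; ring
    have hE2eq : E2 = a1 - 2 * a0 + am := by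
      rw [hE2def, ha1, ha0, ham, ← comb2]; ring
    have hE3eq : E3 = b2 - 3 * b1 + 3 * b0 - bm := by
      rw [hE3def, hb2, hb1, hb0, hbm, ← comb3]; ring
    have hE2b : |E2| ≤ 108 * C2 * h ^ 3 := by
      rw [hE2eq]
      have t1 : |a1 - 2 * a0 + am| ≤ |a1| + |2 * a0| + |am| :=
        le_trans (abs_add_le _ _) (add_le_add (abs_sub _ _) le_rfl)
      rw [abs_mul] at t1
      have : |(2 : ℝ)| = 2 := by norm_num
      rw [this] at t1
      linarith
    have hE3b : |E3| ≤ 648 * C3 * h ^ 4 := by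
      rw [hE3eq]
      have t1 : |b2 - 3 * b1 + 3 * b0 - bm| ≤ |b2 - 3 * b1 + 3 * b0| + |bm| := abs_sub _ _
      have t2 : |b2 - 3 * b1 + 3 * b0| ≤ |b2 - 3 * b1| + |3 * b0| := abs_add_le _ _
      have t3 : |b2 - 3 * b1| ≤ |b2| + |3 * b1| := abs_sub _ _
      rw [abs_mul] at t2 t3
      have h3' : |(3 : ℝ)| = 3 := by norm_num
      rw [h3'] at t2 t3
      linarith
    have key : (f (xc + (1 - lam) * h) - 2 * f (xc + -lam * h) + f (xc + (-1 - lam) * h))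
        * (f (xc + (2 - lam) * h) - 3 * f (xc + (1 - lam) * h) + 3 * f (xc + -lam * h)
          - f (xc + (-1 - lam) * h)) - f2 * f3 * h ^ 5
        = f2 * h ^ 2 * E3 + E2 * (f3 * h ^ 3) + E2 * E3 := by
      rw [hE2def, hE3def]; ring
    rw [key]
    have t1 : |f2 * h ^ 2 * E3| ≤ |f2| * h ^ 2 * (648 * C3 * h ^ 4) := by
      rw [abs_mul, abs_mul, abs_pow, abs_of_pos hh]
      exact mul_le_mul_of_nonneg_left hE3b (by positivity)
    have t2 : |E2 * (f3 * h ^ 3)| ≤ 108 * C2 * h ^ 3 * (|f3| * h ^ 3) := by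
      rw [abs_mul, abs_mul, abs_pow, abs_of_pos hh]
      exact mul_le_mul hE2b (le_refl _) (by positivity)
        (mul_nonneg (mul_nonneg (by norm_num) hC20) (pow_pos hh 3).le)
    have t3 : |E2 * E3| ≤ 108 * C2 * h ^ 3 * (648 * C3 * h ^ 4) := by
      rw [abs_mul]
      exact mul_le_mul hE2b hE3b (abs_nonneg _)
        (mul_nonneg (mul_nonneg (by norm_num) hC20) (pow_pos hh 3).le)
    have h76 : h ^ 7 ≤ h ^ 6 := by
      calc h ^ 7 = h ^ 6 * h := by ring
        _ ≤ h ^ 6 * 1 := mul_le_mul_of_nonneg_left hh1 (pow_pos hh 6).le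
        _ = h ^ 6 := by ring
    calc |f2 * h ^ 2 * E3 + E2 * (f3 * h ^ 3) + E2 * E3|
        ≤ |f2 * h ^ 2 * E3| + |E2 * (f3 * h ^ 3)| + |E2 * E3| := abs_add_three _ _ _
      _ ≤ |f2| * h ^ 2 * (648 * C3 * h ^ 4) + 108 * C2 * h ^ 3 * (|f3| * h ^ 3)
          + 108 * C2 * h ^ 3 * (648 * C3 * h ^ 4) := by linarith
      _ = (648 * |f2| * C3 + 108 * C2 * |f3|) * h ^ 6 + 69984 * C2 * C3 * h ^ 7 := by ring
      _ ≤ (648 * |f2| * C3 + 108 * C2 * |f3|) * h ^ 6 + 69984 * C2 * C3 * h ^ 6 := by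
          have hcc : (0:ℝ) ≤ 69984 * C2 * C3 :=
            mul_nonneg (mul_nonneg (by norm_num) hC20) hC30
          have := mul_le_mul_of_nonneg_left h76 hcc
          linarith
      _ = (648 * |f2| * C3 + 108 * C2 * |f3| + 69984 * C2 * C3) * h ^ 6 := by ring
      _ ≤ (648 * |f2| * C3 + 108 * C2 * |f3| + 69984 * C2 * C3 + 1) * h ^ 6 :=
          mul_le_mul_of_nonneg_right (by linarith) (pow_pos hh 6).le
  · -- lam = 0 case
    intro hlam0
    subst hlam0
    obtain ⟨C4, hC40, hC4⟩ := taylor_bound 4 f hftop xc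
    set P : ℝ → ℝ := fun t => ∑ k ∈ Finset.range 5,
      iteratedDeriv k f xc * t ^ k / (Nat.factorial k) with hPdef
    have hP : ∀ t, P t = iteratedDeriv 0 f xc + iteratedDeriv 1 f xc * t
        + f2 * t ^ 2 / 2 + f3 * t ^ 3 / 6 + f4 * t ^ 4 / 24 := by
      intro t
      simp [hPdef, Finset.sum_range_succ, Nat.factorial, ← hf2, ← hf3, ← hf4]
    refine ⟨36 * (|f2| + |f4|) * C4 + 4 * C4 * (|f3| + |f4|) + 144 * C4 * C4
        + |f3| * |f4| + |f4| * |f4| + 1, by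
        nlinarith [mul_nonneg (add_nonneg (abs_nonneg f2) (abs_nonneg f4)) hC40,
          mul_nonneg hC40 (add_nonneg (abs_nonneg f3) (abs_nonneg f4)),
          mul_nonneg hC40 hC40, mul_nonneg (abs_nonneg f3) (abs_nonneg f4),
          mul_nonneg (abs_nonneg f4) (abs_nonneg f4)], 1 / 2, by norm_num,
        fun h hh hδ => ?_⟩
    have hh1 : h ≤ 1 := by linarith
    have h2h : 2 * h ≤ 1 := by linarith
    have hb0 : f xc - P 0 = 0 := by
      have := hC4 0 (by norm_num)
      simp only [abs_zero] at this
      norm_num at this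
      have h0 : |f xc - P 0| ≤ 0 := by simpa using this
      have := abs_nonneg (f xc - P 0)
      linarith [abs_le.mp h0]
    have herr : ∀ t : ℝ, |t| ≤ 1 → |f (xc + t) - P t| ≤ C4 * |t| ^ 5 := hC4
    have hep : |f (xc + h) - P h| ≤ C4 * h ^ 5 := by
      have := herr h (by rw [abs_of_pos hh]; linarith)
      rwa [abs_of_pos hh] at this
    have hem : |f (xc - h) - P (-h)| ≤ C4 * h ^ 5 := by
      have := herr (-h) (by rw [abs_neg, abs_of_pos hh]; linarith)
      rw [abs_neg, abs_of_pos hh] at this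
      have harg : xc + -h = xc - h := by ring
      rwa [harg] at this
    have he2 : |f (xc + 2 * h) - P (2 * h)| ≤ 32 * C4 * h ^ 5 := by
      have habs : |2 * h| = 2 * h := by rw [abs_of_pos]; linarith
      have := herr (2 * h) (by rw [habs]; linarith)
      rw [habs] at this
      calc |f (xc + 2 * h) - P (2 * h)| ≤ C4 * (2 * h) ^ 5 := this
        _ = 32 * C4 * h ^ 5 := by ring
    set A := f2 * h ^ 2 + f4 * h ^ 4 / 12 with hAdef
    set B := f3 * h ^ 3 + f4 * h ^ 4 / 2 with hBdef
    set E2 := f (xc + h) - 2 * f xc + f (xc - h) - A with hE2def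
    set E3 := f (xc + 2 * h) - 3 * f (xc + h) + 3 * f xc - f (xc - h) - B with hE3def
    have comb2 : P h - 2 * P 0 + P (-h) = A := by simp only [hP, hAdef]; ring
    have comb3 : P (2 * h) - 3 * P h + 3 * P 0 - P (-h) = B := by
      simp only [hP, hBdef]; ring
    have hE2eq : E2 = (f (xc + h) - P h) + (f (xc - h) - P (-h)) := by
      rw [hE2def, ← comb2]
      linear_combination (-2 : ℝ) * hb0
    have hE3eq : E3 = (f (xc + 2 * h) - P (2 * h)) - 3 * (f (xc + h) - P h)
        - (f (xc - h) - P (-h)) := by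
      rw [hE3def, ← comb3]
      linear_combination (3 : ℝ) * hb0
    have hE2b : |E2| ≤ 4 * C4 * h ^ 5 := by
      rw [hE2eq]
      have := abs_add_le (f (xc + h) - P h) (f (xc - h) - P (-h))
      have hn : 0 ≤ C4 * h ^ 5 := mul_nonneg hC40 (pow_pos hh 5).le
      linarith
    have hE3b : |E3| ≤ 36 * C4 * h ^ 5 := by
      rw [hE3eq]
      have t1 : |(f (xc + 2 * h) - P (2 * h)) - 3 * (f (xc + h) - P h)
          - (f (xc - h) - P (-h))|
          ≤ |(f (xc + 2 * h) - P (2 * h)) - 3 * (f (xc + h) - P h)|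
            + |f (xc - h) - P (-h)| := abs_sub _ _
      have t2 : |(f (xc + 2 * h) - P (2 * h)) - 3 * (f (xc + h) - P h)|
          ≤ |f (xc + 2 * h) - P (2 * h)| + |3 * (f (xc + h) - P h)| := abs_sub _ _
      rw [abs_mul] at t2
      have h3' : |(3 : ℝ)| = 3 := by norm_num
      rw [h3'] at t2
      have hn : 0 ≤ C4 * h ^ 5 := mul_nonneg hC40 (pow_pos hh 5).le
      linarith
    have hAb : |A| ≤ (|f2| + |f4|) * h ^ 2 := by
      rw [hAdef]
      have t1 : |f2 * h ^ 2 + f4 * h ^ 4 / 12| ≤ |f2 * h ^ 2| + |f4 * h ^ 4 / 12| :=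
        abs_add_le _ _
      rw [abs_mul, abs_div, abs_mul, abs_pow, abs_pow, abs_of_pos hh] at t1
      have h42 : h ^ 4 ≤ h ^ 2 := pow_le_pow_of_le_one hh.le hh1 (by norm_num)
      have : |f4| * h ^ 4 / |(12 : ℝ)| ≤ |f4| * h ^ 2 := by
        rw [show |(12 : ℝ)| = 12 by norm_num]
        have : |f4| * h ^ 4 ≤ |f4| * h ^ 2 :=
          mul_le_mul_of_nonneg_left h42 (abs_nonneg _)
        nlinarith [abs_nonneg f4, pow_pos hh 4]
      nlinarith [abs_nonneg f2, pow_pos hh 2]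
    have hBb : |B| ≤ (|f3| + |f4|) * h ^ 3 := by
      rw [hBdef]
      have t1 : |f3 * h ^ 3 + f4 * h ^ 4 / 2| ≤ |f3 * h ^ 3| + |f4 * h ^ 4 / 2| :=
        abs_add_le _ _
      rw [abs_mul, abs_div, abs_mul, abs_pow, abs_pow, abs_of_pos hh] at t1
      have h43 : h ^ 4 ≤ h ^ 3 := pow_le_pow_of_le_one hh.le hh1 (by norm_num)
      have : |f4| * h ^ 4 / |(2 : ℝ)| ≤ |f4| * h ^ 3 := by
        rw [show |(2 : ℝ)| = 2 by norm_num]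
        have : |f4| * h ^ 4 ≤ |f4| * h ^ 3 :=
          mul_le_mul_of_nonneg_left h43 (abs_nonneg _)
        nlinarith [abs_nonneg f4, pow_pos hh 4]
      nlinarith [abs_nonneg f3, pow_pos hh 3]
    have key : (f (xc + h) - 2 * f xc + f (xc - h))
        * (f (xc + 2 * h) - 3 * f (xc + h) + 3 * f xc - f (xc - h))
        - (f2 * f3 * h ^ 5 + 1 / 2 * f2 * f4 * h ^ 6)
        = A * E3 + E2 * B + E2 * E3 + f3 * f4 / 12 * h ^ 7 + f4 * f4 / 24 * h ^ 8 := by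
      rw [hE2def, hE3def, hAdef, hBdef]; ring
    rw [key]
    have t1 : |A * E3| ≤ (|f2| + |f4|) * h ^ 2 * (36 * C4 * h ^ 5) := by
      rw [abs_mul]
      exact mul_le_mul hAb hE3b (abs_nonneg _) (by positivity)
    have t2 : |E2 * B| ≤ 4 * C4 * h ^ 5 * ((|f3| + |f4|) * h ^ 3) := by
      rw [abs_mul]
      exact mul_le_mul hE2b hBb (abs_nonneg _) (by positivity)
    have t3 : |E2 * E3| ≤ 4 * C4 * h ^ 5 * (36 * C4 * h ^ 5) := by
      rw [abs_mul]
      exact mul_le_mul hE2b hE3b (abs_nonneg _) (by positivity)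
    have t4 : |f3 * f4 / 12 * h ^ 7| ≤ |f3| * |f4| * h ^ 7 := by
      rw [abs_mul, abs_div, abs_mul, abs_pow, abs_of_pos hh]
      rw [show |(12 : ℝ)| = 12 by norm_num]
      nlinarith [mul_nonneg (abs_nonneg f3) (abs_nonneg f4), pow_pos hh 7]
    have t5 : |f4 * f4 / 24 * h ^ 8| ≤ |f4| * |f4| * h ^ 7 := by
      rw [abs_mul, abs_div, abs_mul, abs_pow, abs_of_pos hh]
      rw [show |(24 : ℝ)| = 24 by norm_num]
      have h87 : h ^ 8 ≤ h ^ 7 := pow_le_pow_of_le_one hh.le hh1 (by norm_num)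
      nlinarith [mul_nonneg (abs_nonneg f4) (abs_nonneg f4), pow_pos hh 8, pow_pos hh 7]
    have hsum : |A * E3 + E2 * B + E2 * E3 + f3 * f4 / 12 * h ^ 7 + f4 * f4 / 24 * h ^ 8|
        ≤ |A * E3| + |E2 * B| + |E2 * E3| + |f3 * f4 / 12 * h ^ 7|
          + |f4 * f4 / 24 * h ^ 8| := by
      have u1 := abs_add_le (A * E3 + E2 * B + E2 * E3 + f3 * f4 / 12 * h ^ 7)
        (f4 * f4 / 24 * h ^ 8)
      have u2 := abs_add_le (A * E3 + E2 * B + E2 * E3) (f3 * f4 / 12 * h ^ 7)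
      have u3 := abs_add_three (A * E3) (E2 * B) (E2 * E3)
      linarith
    have h87 : h ^ 8 ≤ h ^ 7 := pow_le_pow_of_le_one hh.le hh1 (by norm_num)
    have h107 : h ^ 10 ≤ h ^ 7 := pow_le_pow_of_le_one hh.le hh1 (by norm_num)
    calc |A * E3 + E2 * B + E2 * E3 + f3 * f4 / 12 * h ^ 7 + f4 * f4 / 24 * h ^ 8|
        ≤ (|f2| + |f4|) * h ^ 2 * (36 * C4 * h ^ 5)
          + 4 * C4 * h ^ 5 * ((|f3| + |f4|) * h ^ 3)
          + 4 * C4 * h ^ 5 * (36 * C4 * h ^ 5)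
          + |f3| * |f4| * h ^ 7 + |f4| * |f4| * h ^ 7 := by linarith [hsum]
      _ = 36 * (|f2| + |f4|) * C4 * h ^ 7 + 4 * C4 * (|f3| + |f4|) * h ^ 8
          + 144 * C4 * C4 * h ^ 10 + |f3| * |f4| * h ^ 7 + |f4| * |f4| * h ^ 7 := by ring
      _ ≤ 36 * (|f2| + |f4|) * C4 * h ^ 7 + 4 * C4 * (|f3| + |f4|) * h ^ 7
          + 144 * C4 * C4 * h ^ 7 + |f3| * |f4| * h ^ 7 + |f4| * |f4| * h ^ 7 := by
          have n1 : 0 ≤ 4 * C4 * (|f3| + |f4|) :=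
            mul_nonneg (mul_nonneg (by norm_num) hC40)
              (add_nonneg (abs_nonneg _) (abs_nonneg _))
          have n2 : 0 ≤ 144 * C4 * C4 := mul_nonneg (mul_nonneg (by norm_num) hC40) hC40
          linarith [mul_le_mul_of_nonneg_left h87 n1, mul_le_mul_of_nonneg_left h107 n2]
      _ = (36 * (|f2| + |f4|) * C4 + 4 * C4 * (|f3| + |f4|) + 144 * C4 * C4
          + |f3| * |f4| + |f4| * |f4|) * h ^ 7 := by ring
      _ ≤ (36 * (|f2| + |f4|) * C4 + 4 * C4 * (|f3| + |f4|) + 144 * C4 * C4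
          + |f3| * |f4| + |f4| * |f4| + 1) * h ^ 7 :=
          mul_le_mul_of_nonneg_right (by linarith) (pow_pos hh 7).le
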